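/- Let α ∈ ℂ with |α| = 1, let r̂ be the largest real root of r³ − 6r + 2α + 2conj(α) = 0, and let D₃(r̂) be the 3×3 matrix [[r̂, conj(α), 2·conj(α)²], [α, r̂, 1], [2α², 1, r̂]]. Then the vector (−2·conj(α)² + r̂⁻¹·conj(α), 2·conj(α)·r̂⁻¹ − 1, r̂ − r̂⁻¹)ᵀ ∈ ℂ³ is nonzero and lies in the kernel of D₃(r̂), and it spans the kernel of D₃(r̂). -/

import Mathlib

/-- The matrix `D₃(r)` of the 3⊗3 construction. -/
noncomputable def D3 (α : ℂ) (r : ℝ) : Matrix (Fin 3) (Fin 3) ℂ :=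
  !![(r : ℂ), (starRingEnd ℂ) α, 2 * ((starRingEnd ℂ) α) ^ 2;
     α, (r : ℂ), 1;
     2 * α ^ 2, 1, (r : ℂ)]

/-!
When `α * conj α = 1`, the determinant of `D₃(r)` is the cubic `r³ - 6r + 2α + 2 conj α`, and
the cross product of its first two rows is `r` times the given vector. For a singular `3 × 3`
matrix the cross product of two rows is annihilated by the third row (the triple product is the
determinant), and when it is nonzero it spans the common orthogonal complement of the two rows,
hence the kernel. The cubic has a root in `[2, 3]`, so the largest
root satisfies `r̂ ≥ 2`, which makes the third coordinate `r̂ - r̂⁻¹` nonzero.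
-/

open Matrix ComplexConjugate

theorem exists_eq_smul_cross_of_dotProduct_eq_zero {F : Type*} [Field F] {u w x : Fin 3 → F}
    (hn : u ⨯₃ w ≠ 0) (hu : u ⬝ᵥ x = 0) (hw : w ⬝ᵥ x = 0) : ∃ c : F, x = c • (u ⨯₃ w) := by
  have hcross : (u ⨯₃ w) ⨯₃ x = 0 := by
    rw [← cross_anticomm, cross_cross_eq_smul_sub_smul', dotProduct_comm x w, hw, hu,
      zero_smul, zero_smul, sub_zero, neg_zero]
  have hdep : ¬LinearIndependent F ![u ⨯₃ w, x] :=
    fun h => crossProduct_ne_zero_iff_linearIndependent.mpr h hcross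
  rw [LinearIndependent.pair_iff' hn] at hdep
  push Not at hdep
  obtain ⟨c, hc⟩ := hdep
  exact ⟨c, hc.symm⟩

namespace Matrix

theorem mulVec_cross_rows_eq_zero {R : Type*} [CommRing R] {M : Matrix (Fin 3) (Fin 3) R}
    (h : M.det = 0) : M *ᵥ (M 0 ⨯₃ M 1) = 0 := by
  have hrows : ![M 0, M 1, M 2] = M := by ext i; fin_cases i <;> rfl
  ext i
  fin_cases i
  · exact dot_self_cross _ _
  · exact dot_cross_self _ _
  · change M 2 ⬝ᵥ (M 0 ⨯₃ M 1) = 0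
    rw [triple_product_permutation, triple_product_eq_det, hrows, h]

theorem eq_smul_cross_rows_of_mulVec_eq_zero {F : Type*} [Field F] {M : Matrix (Fin 3) (Fin 3) F}
    (hn : M 0 ⨯₃ M 1 ≠ 0) {x : Fin 3 → F} (hx : M *ᵥ x = 0) : ∃ c : F, x = c • (M 0 ⨯₃ M 1) :=
  exists_eq_smul_cross_of_dotProduct_eq_zero hn (congrFun hx 0) (congrFun hx 1)

end Matrix

theorem exists_root_cubic_mem_Icc {c : ℝ} (hc : |c| ≤ 4) :
    ∃ s ∈ Set.Icc (2 : ℝ) 3, s ^ 3 - 6 * s + c = 0 := by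
  obtain ⟨hc₁, hc₂⟩ := abs_le.mp hc
  have hcont : ContinuousOn (fun s : ℝ => s ^ 3 - 6 * s + c) (Set.Icc 2 3) := by fun_prop
  exact intermediate_value_Icc (by norm_num) hcont ⟨by norm_num; linarith, by norm_num; linarith⟩

theorem exists_two_le_root_of_norm_eq_one {α : ℂ} (hα : ‖α‖ = 1) :
    ∃ s : ℝ, 2 ≤ s ∧ (s : ℂ) ^ 3 - 6 * s + 2 * α + 2 * conj α = 0 := by
  have hre : |4 * α.re| ≤ 4 := by
    rw [abs_mul, abs_of_pos four_pos]
    linarith [hα ▸ Complex.abs_re_le_norm α]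
  obtain ⟨s, hs, hroot⟩ := exists_root_cubic_mem_Icc hre
  refine ⟨s, hs.1, ?_⟩
  have hsum : α + conj α = ((2 * α.re : ℝ) : ℂ) := Complex.add_conj α
  have hroot' : ((s ^ 3 - 6 * s + 4 * α.re : ℝ) : ℂ) = 0 := by exact_mod_cast hroot
  push_cast at hsum hroot'
  linear_combination hroot' + 2 * hsum

theorem det_D3 {α : ℂ} (hα : α * conj α = 1) (r : ℝ) :
    (D3 α r).det = (r : ℂ) ^ 3 - 6 * r + 2 * α + 2 * conj α := by
  rw [det_fin_three]
  simp only [D3, Fin.isValue, of_apply, cons_val', cons_val_zero, cons_val_fin_one, cons_val_one,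
    cons_val, mul_one]
  linear_combination (2 * α + 2 * conj α - r - 4 * r * (α * conj α + 1)) * hα

theorem D3_cross_rows {α : ℂ} (hα : α * conj α = 1) {r : ℝ} (hr : (r : ℂ) ≠ 0) :
    D3 α r 0 ⨯₃ D3 α r 1 = (r : ℂ) • ![-2 * (conj α) ^ 2 + (r : ℂ)⁻¹ * conj α,
       2 * conj α * (r : ℂ)⁻¹ - 1, (r : ℂ) - (r : ℂ)⁻¹] := by
  have hinv : (r : ℂ) * (r : ℂ)⁻¹ = 1 := mul_inv_cancel₀ hr
  rw [cross_apply]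
  ext i
  fin_cases i <;>
    simp only [D3, Fin.isValue, Fin.zero_eta, Fin.mk_one, Fin.reduceFinMk, of_apply, cons_val',
      cons_val_zero, cons_val_one, cons_val_fin_one, cons_val, mul_one, neg_mul, Pi.smul_apply,
      smul_eq_mul]
  · linear_combination (-conj α) * hinv
  · linear_combination 2 * conj α * hα - 2 * conj α * hinv
  · linear_combination -hα + hinv

theorem stmt10 (α : ℂ) (hα : ‖α‖ = 1) (rh : ℝ)
    (hroot : (rh : ℂ) ^ 3 - 6 * (rh : ℂ) + 2 * α + 2 * (starRingEnd ℂ) α = 0)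
    (hmax : ∀ s : ℝ, (s : ℂ) ^ 3 - 6 * (s : ℂ) + 2 * α + 2 * (starRingEnd ℂ) α = 0 → s ≤ rh) :
    (![-2 * ((starRingEnd ℂ) α) ^ 2 + (rh : ℂ)⁻¹ * (starRingEnd ℂ) α,
       2 * (starRingEnd ℂ) α * (rh : ℂ)⁻¹ - 1,
       (rh : ℂ) - (rh : ℂ)⁻¹] : Fin 3 → ℂ) ≠ 0 ∧
    (D3 α rh).mulVec
      ![-2 * ((starRingEnd ℂ) α) ^ 2 + (rh : ℂ)⁻¹ * (starRingEnd ℂ) α,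
        2 * (starRingEnd ℂ) α * (rh : ℂ)⁻¹ - 1,
        (rh : ℂ) - (rh : ℂ)⁻¹] = 0 ∧
    ∀ x : Fin 3 → ℂ, (D3 α rh).mulVec x = 0 →
      ∃ c : ℂ, x = c • ![-2 * ((starRingEnd ℂ) α) ^ 2 + (rh : ℂ)⁻¹ * (starRingEnd ℂ) α,
                         2 * (starRingEnd ℂ) α * (rh : ℂ)⁻¹ - 1,
                         (rh : ℂ) - (rh : ℂ)⁻¹] := by
  set v : Fin 3 → ℂ := ![-2 * (conj α) ^ 2 + (rh : ℂ)⁻¹ * conj α,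
    2 * conj α * (rh : ℂ)⁻¹ - 1, (rh : ℂ) - (rh : ℂ)⁻¹]
  have hunit : α * conj α = 1 := by
    rw [Complex.mul_conj, Complex.normSq_eq_norm_sq, hα, one_pow, Complex.ofReal_one]
  obtain ⟨s, hs, hsroot⟩ := exists_two_le_root_of_norm_eq_one hα
  have hr : 2 ≤ rh := hs.trans (hmax s hsroot)
  have hr0 : (rh : ℂ) ≠ 0 := Complex.ofReal_ne_zero.mpr (by positivity)
  have hv : v ≠ 0 := by
    intro h
    have h2 : (rh : ℂ) - (rh : ℂ)⁻¹ = 0 := congrFun h 2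
    have hpos : 0 < rh - rh⁻¹ := by linarith [inv_lt_one_of_one_lt₀ (by linarith : (1 : ℝ) < rh)]
    exact hpos.ne' (by exact_mod_cast h2)
  have hcross := D3_cross_rows hunit hr0
  refine ⟨hv, ?_, fun x hx => ?_⟩
  · have := mulVec_cross_rows_eq_zero ((det_D3 hunit rh).trans hroot)
    rwa [hcross, mulVec_smul, smul_eq_zero_iff_right hr0] at this
  · obtain ⟨c, rfl⟩ := eq_smul_cross_rows_of_mulVec_eq_zero (hcross ▸ smul_ne_zero hr0 hv) hx
    exact ⟨c * rh, by rw [hcross, smul_smul]⟩
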